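/- Fix k ∈ ℕ. Let Ê be the open segment from (0,0) to (1,0), an edge of the unit triangle K̂. There exists a constant C > 0 (depending only on k) such that for every h > 0 and every real polynomial w in two variables of total degree at most k, ∫_{hÊ} w² dH¹ ≤ C · h⁻¹ · ∫_{hK̂} w² dx, where H¹ is the one-dimensional Hausdorff measure on the segment hÊ = {h·x : x ∈ Ê}. -/

import Mathlib

open MeasureTheory

/-- Evaluation of a two-variable polynomial at a point of `ℝ²`. -/
noncomputable def evalP (p : MvPolynomial (Fin 2) ℝ) (x : ℝ × ℝ) : ℝ :=
  MvPolynomial.eval ![x.1, x.2] p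

/-- The open unit triangle `K̂ = {(x₁,x₂) : x₁ > 0, x₂ > 0, x₁ + x₂ < 1}`. -/
def unitTriangle : Set (ℝ × ℝ) := {x | 0 < x.1 ∧ 0 < x.2 ∧ x.1 + x.2 < 1}

/-- The open edge `Ê` of the unit triangle from `(0,0)` to `(1,0)`. -/
def unitEdge : Set (ℝ × ℝ) := {x | 0 < x.1 ∧ x.1 < 1 ∧ x.2 = 0}

/-- The dilation `h·S` of a subset `S` of `ℝ²`. -/
def dilate (h : ℝ) (S : Set (ℝ × ℝ)) : Set (ℝ × ℝ) := (fun x => h • x) '' S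

open Set

set_option maxHeartbeats 1000000

lemma evalP_add (p q : MvPolynomial (Fin 2) ℝ) (x : ℝ × ℝ) :
    evalP (p + q) x = evalP p x + evalP q x := by simp [evalP]

lemma evalP_smul (c : ℝ) (p : MvPolynomial (Fin 2) ℝ) (x : ℝ × ℝ) :
    evalP (c • p) x = c * evalP p x := by simp [evalP, MvPolynomial.smul_eval]

lemma continuous_evalP (p : MvPolynomial (Fin 2) ℝ) : Continuous (evalP p) := by
  unfold evalP
  apply p.induction_on
  · intro a; simpa using continuous_const
  · intro p q hp hq; simp only [map_add]; exact hp.add hq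
  · intro p i hp
    simp only [map_mul, MvPolynomial.eval_X]
    exact hp.mul (by fin_cases i <;> simp <;> continuity)

lemma analyticOnNhd_evalP (p : MvPolynomial (Fin 2) ℝ) :
    AnalyticOnNhd ℝ (evalP p) Set.univ := by
  unfold evalP
  apply p.induction_on
  · intro a; simp only [MvPolynomial.eval_C]; exact analyticOnNhd_const
  · intro p q hp hq; simp only [map_add]; exact hp.add hq
  · intro p i hp
    simp only [map_mul, MvPolynomial.eval_X]
    apply hp.mul
    fin_cases i
    · exact fun x _ => by simpa using (ContinuousLinearMap.fst ℝ ℝ ℝ).analyticAt x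
    · exact fun x _ => by simpa using (ContinuousLinearMap.snd ℝ ℝ ℝ).analyticAt x

lemma isOpen_unitTriangle : IsOpen unitTriangle := by
  have : unitTriangle = ((fun x : ℝ × ℝ => x.1) ⁻¹' Ioi 0) ∩ ((fun x : ℝ × ℝ => x.2) ⁻¹' Ioi 0)
      ∩ ((fun x : ℝ × ℝ => x.1 + x.2) ⁻¹' Iio 1) := by
    ext x; simp [unitTriangle, and_assoc]
  rw [this]
  exact (((isOpen_Ioi.preimage continuous_fst).inter (isOpen_Ioi.preimage continuous_snd)).inter
    (isOpen_Iio.preimage (continuous_fst.add continuous_snd)))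

lemma eq_zero_of_evalP_triangle {w : MvPolynomial (Fin 2) ℝ}
    (hz : ∀ x ∈ unitTriangle, evalP w x = 0) : w = 0 := by
  have hmem : ((1:ℝ)/4, (1:ℝ)/4) ∈ unitTriangle := by simp only [unitTriangle, Set.mem_setOf_eq]; norm_num
  have hev : evalP w =ᶠ[nhds (((1:ℝ)/4, (1:ℝ)/4) : ℝ × ℝ)] 0 :=
    Filter.eventually_of_mem (isOpen_unitTriangle.mem_nhds hmem) hz
  have := (analyticOnNhd_evalP w).eqOn_zero_of_preconnected_of_eventuallyEq_zero
    isPreconnected_univ (Set.mem_univ _) hev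
  apply MvPolynomial.funext
  intro x
  have hx : x = ![x 0, x 1] := by
    funext i; fin_cases i <;> simp
  rw [map_zero, hx]
  have h3 := this (Set.mem_univ ((x 0, x 1) : ℝ × ℝ))
  simpa [evalP] using h3


section quad
/-- Abstract bound between two continuous 2-homogeneous functionals on `Fin n → ℝ`. -/
lemma quad_bound {n : ℕ} (E G : (Fin n → ℝ) → ℝ) (hE : Continuous E) (hG : Continuous G)
    (hEh : ∀ (t : ℝ) c, E (t • c) = t ^ 2 * E c) (hGh : ∀ (t : ℝ) c, G (t • c) = t ^ 2 * G c)
    (hGpos : ∀ c, c ≠ 0 → 0 < G c) :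
    ∃ C > (0:ℝ), ∀ c, E c ≤ C * G c := by
  have hE0 : E 0 = 0 := by
    have := hEh 0 0; simpa using this
  have hG0 : G 0 = 0 := by
    have := hGh 0 0; simpa using this
  rcases Nat.eq_zero_or_pos n with hn | hn
  · refine ⟨1, one_pos, fun c => ?_⟩
    have hc : c = 0 := by funext i; exact absurd i.isLt (by omega)
    rw [hc, hE0, hG0]; norm_num
  · haveI : Nonempty (Fin n) := ⟨⟨0, hn⟩⟩
    have hsc : IsCompact (Metric.sphere (0 : Fin n → ℝ) 1) := isCompact_sphere _ _
    have hsne : (Metric.sphere (0 : Fin n → ℝ) 1).Nonempty :=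
      NormedSpace.sphere_nonempty.2 zero_le_one
    obtain ⟨u₀, hu₀S, hmin⟩ := hsc.exists_isMinOn hsne hG.continuousOn
    obtain ⟨u₁, hu₁S, hmax⟩ := hsc.exists_isMaxOn hsne hE.continuousOn
    set m := G u₀ with hm
    set M := E u₁ with hM
    have hu₀ne : u₀ ≠ 0 := by
      intro h; rw [h] at hu₀S; simp at hu₀S
    have hmpos : 0 < m := hGpos u₀ hu₀ne
    refine ⟨max (M / m) 1, lt_of_lt_of_le one_pos (le_max_right _ _), fun c => ?_⟩
    rcases eq_or_ne c 0 with rfl | hc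
    · rw [hE0, hG0]; simp
    · set t := ‖c‖ with ht
      have htpos : 0 < t := norm_pos_iff.2 hc
      set u : Fin n → ℝ := t⁻¹ • c with hu
      have huS : u ∈ Metric.sphere (0 : Fin n → ℝ) 1 := by
        simp only [Metric.mem_sphere, dist_zero_right, hu, norm_smul, norm_inv, norm_norm]
        rw [Real.norm_eq_abs, abs_of_pos htpos]; field_simp
        exact ht.symm
      have hcu : c = t • u := by
        rw [hu, smul_smul, mul_inv_cancel₀ (ne_of_gt htpos), one_smul]
      have hEc : E c ≤ t ^ 2 * M := by
        rw [hcu, hEh]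
        exact mul_le_mul_of_nonneg_left (hmax huS) (sq_nonneg t)
      have hGc : t ^ 2 * m ≤ G c := by
        rw [hcu, hGh]
        exact mul_le_mul_of_nonneg_left (hmin huS) (sq_nonneg t)
      have hMm : M ≤ max (M / m) 1 * m := by
        calc M = M / m * m := by field_simp
        _ ≤ max (M / m) 1 * m := mul_le_mul_of_nonneg_right (le_max_left _ _) hmpos.le
      calc E c ≤ t ^ 2 * M := hEc
        _ ≤ t ^ 2 * (max (M / m) 1 * m) := mul_le_mul_of_nonneg_left hMm (sq_nonneg t)
        _ = max (M / m) 1 * (t ^ 2 * m) := by ring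
        _ ≤ max (M / m) 1 * G c :=
            mul_le_mul_of_nonneg_left hGc (le_trans one_pos.le (le_max_right _ _))

/-- Expansion of the integral of a square of a linear combination. -/
lemma integral_sum_sq {α : Type*} [MeasurableSpace α] (μ : Measure α) (s : Set α)
    {n : ℕ} (ψ : Fin n → α → ℝ)
    (hint : ∀ i j, IntegrableOn (fun x => ψ i x * ψ j x) s μ) (c : Fin n → ℝ) :
    ∫ x in s, (∑ i, c i * ψ i x) ^ 2 ∂μ
      = ∑ i, ∑ j, (c i * c j) * ∫ x in s, ψ i x * ψ j x ∂μ := by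
  have hpt : ∀ x, (∑ i, c i * ψ i x) ^ 2
      = ∑ i, ∑ j, (c i * c j) * (ψ i x * ψ j x) := by
    intro x
    rw [sq, Finset.sum_mul_sum]
    refine Finset.sum_congr rfl fun i _ => Finset.sum_congr rfl fun j _ => by ring
  simp_rw [hpt]
  rw [integral_finset_sum]
  · refine Finset.sum_congr rfl fun i _ => ?_
    rw [integral_finset_sum]
    · exact Finset.sum_congr rfl fun j _ => integral_const_mul _ _
    · exact fun j _ => (hint i j).const_mul _
  · intro i _
    exact integrable_finset_sum _ fun j _ => (hint i j).const_mul _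
end quad

noncomputable section

/-- `L²`-type functional over the unit triangle. -/
noncomputable def Gform (w : MvPolynomial (Fin 2) ℝ) : ℝ :=
  ∫ y in unitTriangle, (evalP w y) ^ 2

/-- `L²`-type functional over the unit edge (as a subset of `ℝ`). -/
noncomputable def Fform (w : MvPolynomial (Fin 2) ℝ) : ℝ :=
  ∫ u in Ioo (0:ℝ) 1, (evalP w (u, 0)) ^ 2

lemma unitTriangle_subset_Icc : unitTriangle ⊆ Icc ((0:ℝ), (0:ℝ)) (1, 1) := by
  rintro ⟨x₁, x₂⟩ ⟨h1, h2, h3⟩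
  simp only [mem_Icc, Prod.mk_le_mk]
  refine ⟨⟨h1.le, h2.le⟩, ⟨by linarith, by linarith⟩⟩

lemma integrableOn_triangle (f : ℝ × ℝ → ℝ) (hf : Continuous f) :
    IntegrableOn f unitTriangle := by
  exact (hf.continuousOn.integrableOn_compact isCompact_Icc).mono_set unitTriangle_subset_Icc

lemma integrableOn_Ioo01 (f : ℝ → ℝ) (hf : Continuous f) :
    IntegrableOn f (Ioo (0:ℝ) 1) := by
  exact (hf.continuousOn.integrableOn_compact isCompact_Icc).mono_set Ioo_subset_Icc_self

lemma Gform_pos {w : MvPolynomial (Fin 2) ℝ} (hw : w ≠ 0) : 0 < Gform w := by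
  rw [Gform, setIntegral_pos_iff_support_of_nonneg_ae
    (Filter.Eventually.of_forall fun x => sq_nonneg _)
    (integrableOn_triangle _ (by exact (continuous_evalP w).pow 2))]
  obtain ⟨x, hx, hxne⟩ : ∃ x ∈ unitTriangle, evalP w x ≠ 0 := by
    by_contra hcon; push_neg at hcon; exact hw (eq_zero_of_evalP_triangle hcon)
  have hopen : IsOpen (Function.support (fun y => (evalP w y) ^ 2) ∩ unitTriangle) :=
    (((continuous_evalP w).pow 2).isOpen_support).inter isOpen_unitTriangle
  refine hopen.measure_pos volume ⟨x, ?_, hx⟩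
  simp [Function.mem_support, pow_eq_zero_iff, hxne]

/-- Core inequality on the reference element. -/
lemma key_ineq (k : ℕ) : ∃ C > (0:ℝ), ∀ w : MvPolynomial (Fin 2) ℝ,
    w.totalDegree ≤ k → Fform w ≤ C * Gform w := by
  classical
  haveI : Module.Free ℝ (MvPolynomial.restrictTotalDegree (Fin 2) ℝ k) :=
    Module.Free.of_divisionRing ℝ _
  set V := MvPolynomial.restrictTotalDegree (Fin 2) ℝ k with hV
  set n := Module.finrank ℝ V with hn
  set b := Module.finBasis ℝ V with hb
  set φ : (Fin n → ℝ) → MvPolynomial (Fin 2) ℝ :=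
    fun c => ∑ i, c i • ((b i : V) : MvPolynomial (Fin 2) ℝ) with hφ
  have hφeval : ∀ c x, evalP (φ c) x = ∑ i, c i * evalP ((b i : V) : MvPolynomial (Fin 2) ℝ) x := by
    intro c x
    simp only [hφ, evalP, map_sum, MvPolynomial.smul_eval]
  -- coefficients of the two quadratic forms
  set ψG : Fin n → (ℝ × ℝ) → ℝ := fun i y => evalP ((b i : V) : MvPolynomial (Fin 2) ℝ) y with hψG
  set ψF : Fin n → ℝ → ℝ := fun i u => evalP ((b i : V) : MvPolynomial (Fin 2) ℝ) (u, 0) with hψF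
  have hintG : ∀ i j, IntegrableOn (fun y => ψG i y * ψG j y) unitTriangle volume :=
    fun i j => integrableOn_triangle _ ((continuous_evalP _).mul (continuous_evalP _))
  have hcont1 : ∀ i, Continuous (ψF i) :=
    fun i => (continuous_evalP _).comp (continuous_id.prodMk continuous_const)
  have hintF : ∀ i j, IntegrableOn (fun u => ψF i u * ψF j u) (Ioo (0:ℝ) 1) volume :=
    fun i j => integrableOn_Ioo01 _ ((hcont1 i).mul (hcont1 j))
  have hGexp : ∀ c, Gform (φ c)
      = ∑ i, ∑ j, (c i * c j) * ∫ y in unitTriangle, ψG i y * ψG j y := by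
    intro c
    rw [Gform]
    simp_rw [hφeval]
    exact integral_sum_sq volume unitTriangle ψG hintG c
  have hFexp : ∀ c, Fform (φ c)
      = ∑ i, ∑ j, (c i * c j) * ∫ u in Ioo (0:ℝ) 1, ψF i u * ψF j u := by
    intro c
    rw [Fform]
    simp_rw [hφeval]
    exact integral_sum_sq volume (Ioo (0:ℝ) 1) ψF hintF c
  -- apply the abstract bound
  obtain ⟨C, hCpos, hC⟩ := quad_bound (fun c => Fform (φ c)) (fun c => Gform (φ c))
    (by
      have : (fun c => Fform (φ c)) = fun c =>
          ∑ i, ∑ j, (c i * c j) * ∫ u in Ioo (0:ℝ) 1, ψF i u * ψF j u := funext hFexp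
      rw [this]
      exact continuous_finset_sum _ fun i _ => continuous_finset_sum _ fun j _ =>
        (((continuous_apply i).mul (continuous_apply j)).mul continuous_const))
    (by
      have : (fun c => Gform (φ c)) = fun c =>
          ∑ i, ∑ j, (c i * c j) * ∫ y in unitTriangle, ψG i y * ψG j y := funext hGexp
      rw [this]
      exact continuous_finset_sum _ fun i _ => continuous_finset_sum _ fun j _ =>
        (((continuous_apply i).mul (continuous_apply j)).mul continuous_const))
    (by
      intro t c
      show Fform (φ (t • c)) = t ^ 2 * Fform (φ c)
      rw [hFexp, hFexp]
      rw [Finset.mul_sum]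
      refine Finset.sum_congr rfl fun i _ => ?_
      rw [Finset.mul_sum]
      refine Finset.sum_congr rfl fun j _ => ?_
      simp only [Pi.smul_apply, smul_eq_mul]
      ring)
    (by
      intro t c
      show Gform (φ (t • c)) = t ^ 2 * Gform (φ c)
      rw [hGexp, hGexp]
      rw [Finset.mul_sum]
      refine Finset.sum_congr rfl fun i _ => ?_
      rw [Finset.mul_sum]
      refine Finset.sum_congr rfl fun j _ => ?_
      simp only [Pi.smul_apply, smul_eq_mul]
      ring)
    (by
      intro c hc
      apply Gform_pos
      have hsum : φ c = ((b.equivFun.symm c : V) : MvPolynomial (Fin 2) ℝ) := by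
        rw [Module.Basis.equivFun_symm_apply]
        push_cast
        rfl
      rw [hsum]
      simp only [ne_eq, ZeroMemClass.coe_eq_zero]
      intro h0
      exact hc ((LinearEquiv.map_eq_zero_iff b.equivFun.symm).1 h0))
  refine ⟨C, hCpos, fun w hw => ?_⟩
  have hwV : w ∈ V := (MvPolynomial.mem_restrictTotalDegree _ _ _).2 hw
  set c : Fin n → ℝ := b.equivFun ⟨w, hwV⟩ with hc
  have hφc : φ c = w := by
    have : b.equivFun.symm c = ⟨w, hwV⟩ := b.equivFun.symm_apply_apply _
    have h2 : φ c = ((b.equivFun.symm c : V) : MvPolynomial (Fin 2) ℝ) := by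
      rw [Module.Basis.equivFun_symm_apply]
      push_cast
      rfl
    rw [h2, this]
  have := hC c
  rwa [hφc] at this

end

noncomputable section
/-- The scaled polynomial `w(h·x)`. -/
noncomputable def scaleP (h : ℝ) (w : MvPolynomial (Fin 2) ℝ) : MvPolynomial (Fin 2) ℝ :=
  MvPolynomial.bind₁ (fun i => MvPolynomial.C h * MvPolynomial.X i) w

lemma evalP_scaleP (h : ℝ) (w : MvPolynomial (Fin 2) ℝ) (x : ℝ × ℝ) :
    evalP (scaleP h w) x = evalP w (h • x) := by
  unfold evalP scaleP
  have h1 := MvPolynomial.eval₂Hom_bind₁ (RingHom.id ℝ) (fun j => ![x.1, x.2] j)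
    (fun i => MvPolynomial.C h * MvPolynomial.X i) w
  have h2 : (MvPolynomial.eval₂Hom (RingHom.id ℝ) fun j => ![x.1, x.2] j) = MvPolynomial.eval ![x.1, x.2] := rfl
  rw [h2] at h1
  rw [h1]
  show MvPolynomial.eval (fun i => MvPolynomial.eval ![x.1, x.2]
    (MvPolynomial.C h * MvPolynomial.X i)) w = _
  have h3 : (fun i => MvPolynomial.eval ![x.1, x.2] (MvPolynomial.C h * MvPolynomial.X i))
      = ![(h • x).1, (h • x).2] := by
    funext i
    fin_cases i <;> simp [Prod.smul_def]
  rw [h3]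

lemma totalDegree_scaleP_le (h : ℝ) (w : MvPolynomial (Fin 2) ℝ) :
    (scaleP h w).totalDegree ≤ w.totalDegree := by
  unfold scaleP
  conv_lhs => rw [w.as_sum]
  rw [map_sum]
  apply (MvPolynomial.totalDegree_finset_sum _ _).trans
  apply Finset.sup_le
  intro m hm
  refine le_trans ?_ (MvPolynomial.le_totalDegree hm)
  rw [MvPolynomial.bind₁_monomial]
  apply (MvPolynomial.totalDegree_mul _ _).trans
  rw [MvPolynomial.totalDegree_C, zero_add]
  apply (MvPolynomial.totalDegree_finset_prod _ _).trans
  calc ∑ i ∈ m.support, ((MvPolynomial.C h * MvPolynomial.X i) ^ (m i)).totalDegree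
      ≤ ∑ i ∈ m.support, m i := by
        apply Finset.sum_le_sum
        intro i _
        apply (MvPolynomial.totalDegree_pow _ _).trans
        have h1 : (MvPolynomial.C h * MvPolynomial.X (R := ℝ) i).totalDegree ≤ 1 := by
          apply (MvPolynomial.totalDegree_mul _ _).trans
          simp [MvPolynomial.totalDegree_C, MvPolynomial.totalDegree_X]
        calc m i * (MvPolynomial.C h * MvPolynomial.X (R := ℝ) i).totalDegree
            ≤ m i * 1 := Nat.mul_le_mul_left _ h1
          _ = m i := mul_one _
    _ = m.sum fun _ e => e := rfl

/-- The embedding of the first axis. -/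
def ι : ℝ → ℝ × ℝ := fun t => (t, 0)

lemma isometry_ι : Isometry ι :=
  Isometry.of_dist_eq fun a b => by
    simp [ι, Prod.dist_eq, dist_nonneg]

lemma me_ι : MeasurableEmbedding ι :=
  (isometry_ι.isClosedEmbedding).measurableEmbedding

lemma map_ι (s : Set ℝ) (hs : MeasurableSet s) :
    (μH[1] : Measure (ℝ × ℝ)).restrict (ι '' s) = Measure.map ι (volume.restrict s) := by
  ext A hA
  rw [Measure.restrict_apply hA, me_ι.map_apply, Measure.restrict_apply (me_ι.measurable hA)]
  have him : A ∩ ι '' s = ι '' (ι ⁻¹' A ∩ s) := by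
    rw [Set.image_preimage_inter]
  rw [him, isometry_ι.hausdorffMeasure_image (Or.inl zero_le_one),
    MeasureTheory.hausdorffMeasure_real]

lemma setIntegral_edge (f : ℝ × ℝ → ℝ) (s : Set ℝ) (hs : MeasurableSet s) :
    ∫ x in ι '' s, f x ∂(μH[1]) = ∫ t in s, f (t, 0) := by
  rw [map_ι s hs, me_ι.integral_map]
  rfl

lemma dilate_edge (h : ℝ) (hh : 0 < h) : dilate h unitEdge = ι '' Ioo 0 h := by
  ext x
  constructor
  · rintro ⟨⟨y1, y2⟩, ⟨hy1, hy2, hy3⟩, rfl⟩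
    simp only [mem_image, mem_Ioo, ι]
    refine ⟨h * y1, ⟨mul_pos hh hy1, by nlinarith⟩, ?_⟩
    simp only [Prod.smul_def, smul_eq_mul] at *
    simp [hy3]
  · rintro ⟨t, ⟨ht0, hth⟩, rfl⟩
    refine ⟨(t / h, 0), ⟨div_pos ht0 hh, (div_lt_one hh).2 hth, rfl⟩, ?_⟩
    simp only [Prod.smul_def, smul_eq_mul, ι]
    rw [mul_div_cancel₀ _ hh.ne', mul_zero]

lemma edge_integral (h : ℝ) (hh : 0 < h) (w : MvPolynomial (Fin 2) ℝ) :
    (∫ x in dilate h unitEdge, (evalP w x) ^ 2 ∂(μH[1])) = h * Fform (scaleP h w) := by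
  rw [dilate_edge h hh, setIntegral_edge _ _ measurableSet_Ioo]
  have him : Ioo (0:ℝ) h = (fun u => h * u) '' Ioo 0 1 := by
    rw [Set.image_mul_left_Ioo hh, mul_zero, mul_one]
  rw [him, integral_image_eq_integral_abs_deriv_smul (f' := fun _ => h) measurableSet_Ioo
    (fun u _ => by simpa using ((hasDerivAt_id u).const_mul h).hasDerivWithinAt) (fun a _ b _ hab => by
      exact mul_left_cancel₀ hh.ne' hab)]
  rw [Fform, ← smul_eq_mul, ← integral_smul]
  congr 1
  funext u
  rw [evalP_scaleP]
  have huv : (h : ℝ) • ((u, 0) : ℝ × ℝ) = (h * u, 0) := by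
    simp [Prod.smul_def]
  rw [huv, abs_of_pos hh]

lemma triangle_integral (h : ℝ) (hh : 0 < h) (w : MvPolynomial (Fin 2) ℝ) :
    (∫ x in dilate h unitTriangle, (evalP w x) ^ 2) = h ^ 2 * Gform (scaleP h w) := by
  have hder : ∀ y ∈ unitTriangle, HasFDerivWithinAt (fun y : ℝ × ℝ => h • y)
      (h • (1 : (ℝ × ℝ) →L[ℝ] (ℝ × ℝ))) unitTriangle y := by
    intro y _
    exact ((hasFDerivAt_id y).const_smul h).hasFDerivWithinAt
  have hinj : InjOn (fun y : ℝ × ℝ => h • y) unitTriangle :=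
    fun a _ b _ hab => smul_right_injective _ hh.ne' hab
  have him : dilate h unitTriangle = (fun y : ℝ × ℝ => h • y) '' unitTriangle := rfl
  rw [him, integral_image_eq_integral_abs_det_fderiv_smul volume
    isOpen_unitTriangle.measurableSet (fun y hy => hder y hy) hinj]
  have hdet : (h • (1 : (ℝ × ℝ) →L[ℝ] (ℝ × ℝ))).det = h ^ 2 := by
    rw [ContinuousLinearMap.det, ContinuousLinearMap.coe_smul, ContinuousLinearMap.one_def,
      ContinuousLinearMap.coe_id, LinearMap.det_smul, LinearMap.det_id, mul_one]
    simp [Module.finrank_prod, Module.finrank_self]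
  rw [Gform, ← smul_eq_mul, ← integral_smul]
  congr 1
  funext y
  rw [hdet, evalP_scaleP, abs_of_pos (pow_pos hh 2)]

end


/-- The discrete trace inequality `‖w‖²_{hÊ} ≤ C h⁻¹ ‖w‖²_{hK̂}` for polynomials of
degree at most `k`, with `C` depending only on `k`. -/
theorem discrete_trace_inequality (k : ℕ) :
    ∃ C > (0:ℝ), ∀ h > (0:ℝ), ∀ w : MvPolynomial (Fin 2) ℝ, w.totalDegree ≤ k →
      (∫ x in dilate h unitEdge, (evalP w x)^2 ∂(μH[1])) ≤
        C / h * ∫ x in dilate h unitTriangle, (evalP w x)^2 := by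
  obtain ⟨C, hCpos, hC⟩ := key_ineq k
  refine ⟨C, hCpos, fun h hh w hw => ?_⟩
  rw [edge_integral h hh w, triangle_integral h hh w]
  have hkey := hC (scaleP h w) ((totalDegree_scaleP_le h w).trans hw)
  calc h * Fform (scaleP h w) ≤ h * (C * Gform (scaleP h w)) :=
        mul_le_mul_of_nonneg_left hkey hh.le
    _ = C / h * (h ^ 2 * Gform (scaleP h w)) := by
        field_simp
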